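/- Let D be a generalized skew diagram with dark(Key(D)) = dark(D), and S = Key(D) \ D. For every T ∈ KKD(D), the diagram T ∪ S belongs to KKD(Key(D)). Consequently MaxG(D) ≤ MaxG(Key(D)). -/
import Mathlib


open Finset

/-- A diagram: a finite set of cells in ℕ×ℕ (recorded as (row, column)),
some of which may be marked as ghost cells. -/
structure Diagram where
  cells : Finset (ℕ × ℕ)
  ghosts : Finset (ℕ × ℕ)
deriving DecidableEq

/-- `(r,c)` is the rightmost cell (ghost or not) in row `r` of `D`. -/
def Rightmost (D : Diagram) (r c : ℕ) : Prop :=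
  (r, c) ∈ D.cells ∧ ∀ c' > c, (r, c') ∉ D.cells

/-- A nontrivial K-Kohnert move at row `r` of `D` is possible, taking the
rightmost cell `(r,c)` of row `r` (a non-ghost cell) down to the highest empty
position `(rhat, c)` below it in column `c`, with no ghost cell in between. -/
def KohnertMovable (D : Diagram) (r c rhat : ℕ) : Prop :=
  Rightmost D r c ∧ (r, c) ∉ D.ghosts ∧
  1 ≤ rhat ∧ rhat < r ∧ (rhat, c) ∉ D.cells ∧
  ∀ r', rhat < r' → r' < r → (r', c) ∈ D.cells ∧ (r', c) ∉ D.ghosts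

/-- Result of a Kohnert move: the cell `(r,c)` moves to `(rhat,c)`. -/
def applyKohnert (D : Diagram) (r c rhat : ℕ) : Diagram :=
  ⟨insert (rhat, c) (D.cells.erase (r, c)), D.ghosts⟩

/-- Result of a ghost move: the cell `(r,c)` moves to `(rhat,c)`, leaving a
ghost cell at `(r,c)`. -/
def applyGhost (D : Diagram) (r c rhat : ℕ) : Diagram :=
  ⟨insert (rhat, c) D.cells, insert (r, c) D.ghosts⟩

/-- One (nontrivial) K-Kohnert move. -/
def KStep (D T : Diagram) : Prop :=
  ∃ r c rhat, KohnertMovable D r c rhat ∧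
    (T = applyKohnert D r c rhat ∨ T = applyGhost D r c rhat)

/-- One (nontrivial) ghost move. -/
def GStep (D T : Diagram) : Prop :=
  ∃ r c rhat, KohnertMovable D r c rhat ∧ T = applyGhost D r c rhat

/-- All diagrams obtainable from `D` by sequences of K-Kohnert moves. -/
def KKD (D : Diagram) : Set Diagram := {T | Relation.ReflTransGen KStep D T}

/-- All diagrams obtainable from `D` by sequences of ghost moves. -/
def GKD (D : Diagram) : Set Diagram := {T | Relation.ReflTransGen GStep D T}

/-- Maximum number of ghost cells over `KKD D`. -/
noncomputable def MaxG (D : Diagram) : ℕ :=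
  sSup {n | ∃ T ∈ KKD D, T.ghosts.card = n}

/-- Maximum number of ghost cells over `GKD D`. -/
noncomputable def MaxGhat (D : Diagram) : ℕ :=
  sSup {n | ∃ T ∈ GKD D, T.ghosts.card = n}

/-- Dark clouds of a ghost-free diagram: working from the top row down, mark in
each row the rightmost cell having no marked cell above it in its column. -/
def dark (D : Finset (ℕ × ℕ)) : Finset (ℕ × ℕ) :=
  ((List.range (D.sup Prod.fst + 1)).reverse).foldl
    (fun acc r =>
      let cand := (D.filter (fun p => p.1 = r ∧ ∀ q ∈ acc, q.2 ≠ p.2)).image Prod.snd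
      if h : cand.Nonempty then insert (r, cand.max' h) acc else acc) ∅

/-- Snowflakes of the snow diagram: empty positions lying below a dark cloud
in its column. -/
def snowflakes (D : Finset (ℕ × ℕ)) : Finset (ℕ × ℕ) :=
  ((Finset.range (D.sup Prod.fst + 1)) ×ˢ (D.image Prod.snd)).filter
    (fun p => 1 ≤ p.1 ∧ p ∉ D ∧ ∃ q ∈ dark D, q.2 = p.2 ∧ p.1 < q.1)

/-- Number of snowflakes of the snow diagram of a ghost-free diagram. -/
def sf (D : Finset (ℕ × ℕ)) : ℕ := (snowflakes D).card

/-- A generalized skew diagram: each nonempty row is a contiguous run of cells,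
and both leftmost and rightmost columns weakly increase with the row index. -/
def IsGenSkew (D : Finset (ℕ × ℕ)) : Prop :=
  (∀ p ∈ D, 1 ≤ p.1 ∧ 1 ≤ p.2) ∧
  (∀ r c₁ c c₂, (r, c₁) ∈ D → (r, c₂) ∈ D → c₁ ≤ c → c ≤ c₂ → (r, c) ∈ D) ∧
  (∀ r₁ r₂ c₁, r₁ < r₂ → (r₁, c₁) ∈ D → (∃ c, (r₂, c) ∈ D) →
      ∃ c₂, c₁ ≤ c₂ ∧ (r₂, c₂) ∈ D) ∧
  (∀ r₁ r₂ c₂, r₁ < r₂ → (r₂, c₂) ∈ D → (∃ c, (r₁, c) ∈ D) →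
      ∃ c₁, c₁ ≤ c₂ ∧ (r₁, c₁) ∈ D)

/-- `Key(D)`: the minimal key diagram containing `D`. -/
def keyOf (D : Finset (ℕ × ℕ)) : Finset (ℕ × ℕ) :=
  D.biUnion (fun p => (Finset.Icc 1 p.2).image (fun c => (p.1, c)))

/-- Largest index `i < j` (0-indexed) with `α_i > 0`. -/
def prevIdx (α : List ℕ) (j : ℕ) : Option ℕ :=
  ((List.range j).filter (fun i => 0 < α.getD i 0)).max?

/-- Contribution of step 2 of the skew-diagram construction at (0-indexed) row `j`. -/
def step2contrib (α : List ℕ) (j : ℕ) : ℕ :=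
  if 0 < α.getD j 0 then
    match prevIdx α j with
    | none => 0
    | some i => α.getD i 0 - α.getD j 0
  else 0

/-- Total rightward shift of (0-indexed) row `k` in the skew-diagram construction. -/
def rowShift (α : List ℕ) (k : ℕ) : ℕ :=
  (∑ j ∈ Finset.range (k + 1), step2contrib α j) +
    ((List.range k).filter (fun i => α.getD i 0 = 0)).length

/-- The skew diagram `S(α)` of a weak composition `α`. -/
def skewDiagram (α : List ℕ) : Finset (ℕ × ℕ) :=
  (Finset.range α.length).biUnion (fun i =>
    (Finset.Icc 1 (α.getD i 0)).image (fun c => (i + 1, c + rowShift α i)))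

/-- The lock diagram of a weak composition `α`: `α_i` right-justified cells in row `i`. -/
def lockDiagram (α : List ℕ) : Finset (ℕ × ℕ) :=
  (Finset.range α.length).biUnion (fun i =>
    (Finset.range (α.getD i 0)).image (fun j => (i + 1, α.foldr max 0 - j)))

/-- `L` is a lock-tableau labeling of content `α` on the given set of cells. -/
def IsLockLabeling (α : List ℕ) (cells : Finset (ℕ × ℕ)) (L : ℕ × ℕ → ℕ) : Prop :=
  (∀ p ∈ cells, 1 ≤ L p ∧ L p ≤ α.length) ∧
  (∀ j, 1 ≤ j → j ≤ α.length → 0 < α.getD (j - 1) 0 →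
    ∀ c, α.foldr max 0 - α.getD (j - 1) 0 + 1 ≤ c → c ≤ α.foldr max 0 →
      ∃! p, p ∈ cells ∧ p.2 = c ∧ L p = j) ∧
  (∀ p ∈ cells, p.1 ≤ L p) ∧
  (∀ p ∈ cells, ∀ q ∈ cells, L p = L q → p.2 < q.2 → q.1 ≤ p.1) ∧
  (∀ p ∈ cells, ∀ q ∈ cells, p.2 = q.2 → p.1 < q.1 → L p < L q)

/-- Label of the position `(r,c)` of `T`: for a ghost cell, the label of the
highest non-ghost cell weakly below it in column `c`. -/
def ghostLabel (T : Diagram) (L : ℕ × ℕ → ℕ) (r c : ℕ) : ℕ :=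
  L (((T.cells \ T.ghosts).filter (fun p => p.2 = c ∧ p.1 ≤ r)).sup Prod.fst, c)

/-- The labels, within one column with row set `Rc`, of the modified snow
diagram, where `U` is the set of rows occupied in later columns; rows are
processed from top to bottom. -/
def colLabelList (Rc U : Finset ℕ) : List (ℕ × ℕ) :=
  ((Rc.sort (· ≤ ·)).reverse).foldl
    (fun acc r =>
      if r ∈ U then (r, r) :: acc
      else
        let cand := U.filter (fun s => s < r ∧ ∀ q ∈ acc, q.2 ≠ s)
        if h : cand.Nonempty then (r, cand.max' h) :: acc else (r, 1) :: acc)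
    []

/-- The label of a cell `p ∈ D` in the modified snow diagram `snow-hat(D)`. -/
def hatLabel (D : Finset (ℕ × ℕ)) (p : ℕ × ℕ) : ℕ :=
  ((colLabelList ((D.filter (fun q => q.2 = p.2)).image Prod.fst)
      ((D.filter (fun q => p.2 < q.2)).image Prod.fst)).lookup p.1).getD 0

/-- Number of snowflakes of the modified snow diagram `snow-hat(D)`. -/
def sfhat (D : Finset (ℕ × ℕ)) : ℕ :=
  (((Finset.range (D.sup Prod.fst + 1)) ×ˢ (D.image Prod.snd)).filter
    (fun p => 1 ≤ p.1 ∧ p ∉ D ∧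
      ∃ q ∈ D, q.2 = p.2 ∧ p.1 < q.1 ∧ hatLabel D q ≤ p.1)).card

/-- Cells of `D` that are rightmost in their row. -/
def rmostCells (D : Finset (ℕ × ℕ)) : Finset (ℕ × ℕ) :=
  D.filter (fun p => ∀ q ∈ D, q.1 = p.1 → q.2 ≤ p.2)

/-- `S(D)`: cells that are not rightmost in their row and such that no cell
above them in their column is rightmost in its row. -/
def SofD (D : Finset (ℕ × ℕ)) : Finset (ℕ × ℕ) :=
  D.filter (fun p => p ∉ rmostCells D ∧
    ∀ q ∈ D, q.2 = p.2 → p.1 < q.1 → q ∉ rmostCells D)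

/-- Restriction of `D` to the columns in `C`. -/
def Res (D : Finset (ℕ × ℕ)) (C : Finset ℕ) : Finset (ℕ × ℕ) :=
  D.filter (fun p => p.2 ∈ C)

open Classical in
/-- The ghost move at row `r`, as a function (identity when no move is possible). -/
noncomputable def gmove (T : Diagram) (r : ℕ) : Diagram :=
  if h : ∃ p : ℕ × ℕ, KohnertMovable T r p.1 p.2 then
    applyGhost T r h.choose.1 h.choose.2
  else T

/-- Membership in `keyOf D`. -/
lemma mem_keyOf_iff {D : Finset (ℕ × ℕ)} {r c : ℕ} :
    (r, c) ∈ keyOf D ↔ ∃ c', (r, c') ∈ D ∧ 1 ≤ c ∧ c ≤ c' := by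
  simp only [keyOf, Finset.mem_biUnion, Finset.mem_image, Finset.mem_Icc]
  constructor
  · rintro ⟨⟨a, b⟩, hab, c0, ⟨h1, h2⟩, heq⟩
    obtain ⟨rfl, rfl⟩ := Prod.mk.injEq .. ▸ heq
    exact ⟨b, hab, h1, h2⟩
  · rintro ⟨c', hc', h1, h2⟩
    exact ⟨(r, c'), hc', c, ⟨h1, h2⟩, rfl⟩

/-- Invariant of diagrams reachable from `⟨D, ∅⟩`: every cell's column is
occupied in `D` weakly above its row. -/
def InvD (D : Finset (ℕ × ℕ)) (T : Diagram) : Prop :=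
  ∀ p ∈ T.cells, ∃ r'', p.1 ≤ r'' ∧ (r'', p.2) ∈ D

lemma invD_row_le {D : Finset (ℕ × ℕ)} (hD : IsGenSkew D) {T : Diagram}
    (hInv : InvD D T) {r c r' : ℕ} (hc : (r, c) ∈ T.cells) (hr : r' ≤ r)
    {c₀ : ℕ} (hrow : (r', c₀) ∈ D) (hcc : c ≤ c₀ ∨ ∃ chat, (r', chat) ∈ D ∧ c ≤ chat) :
    (r', c) ∈ D := by
  obtain ⟨r'', hle, hmem⟩ := hInv _ hc
  obtain ⟨chat, hchatD, hcchat⟩ : ∃ chat, (r', chat) ∈ D ∧ c ≤ chat := by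
    rcases hcc with h | h
    · exact ⟨c₀, hrow, h⟩
    · exact h
  rcases eq_or_lt_of_le (hr.trans hle) with heq | hlt
  · exact heq ▸ hmem
  · obtain ⟨c₁, hc₁, hc₁D⟩ := hD.2.2.2 r' r'' c hlt hmem ⟨c₀, hrow⟩
    exact hD.2.1 r' c₁ c chat hc₁D hchatD hc₁ hcchat

/-- A cell of `keyOf D \ D` cannot share column with a `T`-cell weakly above. -/
lemma notS_of_cell {D : Finset (ℕ × ℕ)} (hD : IsGenSkew D) {T : Diagram}
    (hInv : InvD D T) {r c r' : ℕ} (hc : (r, c) ∈ T.cells) (hr : r' ≤ r) :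
    (r', c) ∉ keyOf D \ D := by
  intro hmem
  rw [Finset.mem_sdiff, mem_keyOf_iff] at hmem
  obtain ⟨⟨chat, hchatD, _, hcchat⟩, hnD⟩ := hmem
  exact hnD (invD_row_le hD hInv hc hr hchatD (Or.inr ⟨chat, hchatD, hcchat⟩))

/-- Cells of `keyOf D \ D` in a row are strictly left of every `T`-cell. -/
lemma ltS_of_cell {D : Finset (ℕ × ℕ)} (hD : IsGenSkew D) {T : Diagram}
    (hInv : InvD D T) {r c c' : ℕ} (hc : (r, c) ∈ T.cells)
    (hs : (r, c') ∈ keyOf D \ D) : c' < c := by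
  by_contra hlt
  push_neg at hlt
  rw [Finset.mem_sdiff, mem_keyOf_iff] at hs
  obtain ⟨⟨chat, hchatD, _, hcchat⟩, hnD⟩ := hs
  have hcD : (r, c) ∈ D :=
    invD_row_le hD hInv hc le_rfl hchatD (Or.inr ⟨chat, hchatD, hlt.trans hcchat⟩)
  exact hnD (hD.2.1 r c c' chat hcD hchatD hlt hcchat)

/-- One step lifts across a union with `keyOf D \ D`, and preserves `InvD`. -/
lemma step_lift {D : Finset (ℕ × ℕ)} (hD : IsGenSkew D) {T T' : Diagram}
    (hInv : InvD D T) (h : KStep T T') :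
    InvD D T' ∧
      KStep ⟨T.cells ∪ (keyOf D \ D), T.ghosts⟩
            ⟨T'.cells ∪ (keyOf D \ D), T'.ghosts⟩ := by
  obtain ⟨r, c, rhat, hmov, hcase⟩ := h
  obtain ⟨⟨hcell, hright⟩, hng, h1, hlt, hempty, hbetween⟩ := hmov
  have hInv' : InvD D T' := by
    intro p hp
    have hnew : ∃ r'', (rhat : ℕ) ≤ r'' ∧ (r'', c) ∈ D := by
      obtain ⟨r'', hle, hmem⟩ := hInv _ hcell
      exact ⟨r'', (le_of_lt hlt).trans hle, hmem⟩
    rcases hcase with rfl | rfl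
    · simp only [applyKohnert, Finset.mem_insert, Finset.mem_erase] at hp
      rcases hp with rfl | ⟨_, hp⟩
      · exact hnew
      · exact hInv _ hp
    · simp only [applyGhost, Finset.mem_insert] at hp
      rcases hp with rfl | hp
      · exact hnew
      · exact hInv _ hp
  refine ⟨hInv', r, c, rhat, ?_, ?_⟩
  · refine ⟨⟨Finset.mem_union_left _ hcell, ?_⟩, hng, h1, hlt, ?_, ?_⟩
    · intro c'' hc'' hmem
      rcases Finset.mem_union.mp hmem with hmem | hmem
      · exact hright c'' hc'' hmem
      · exact absurd (ltS_of_cell hD hInv hcell hmem) (not_lt.mpr (le_of_lt hc''))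
    · intro hmem
      rcases Finset.mem_union.mp hmem with hmem | hmem
      · exact hempty hmem
      · exact notS_of_cell hD hInv hcell (le_of_lt hlt) hmem
    · intro r' h₁ h₂
      exact ⟨Finset.mem_union_left _ (hbetween r' h₁ h₂).1, (hbetween r' h₁ h₂).2⟩
  · have hrcS : (r, c) ∉ keyOf D \ D := notS_of_cell hD hInv hcell le_rfl
    rcases hcase with rfl | rfl
    · left
      have hcells : insert (rhat, c) (T.cells.erase (r, c)) ∪ (keyOf D \ D)
          = insert (rhat, c) ((T.cells ∪ (keyOf D \ D)).erase (r, c)) := by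
        ext ⟨a, b⟩
        have hab : (a, b) ∈ keyOf D \ D → (a, b) ≠ (r, c) := by
          intro hs heq; exact hrcS (heq ▸ hs)
        simp only [Finset.mem_union, Finset.mem_insert, Finset.mem_erase]
        tauto
      simp only [applyKohnert]
      rw [hcells]
    · right
      have hcells : insert (rhat, c) T.cells ∪ (keyOf D \ D)
          = insert (rhat, c) (T.cells ∪ (keyOf D \ D)) := by
        ext ⟨a, b⟩
        simp only [Finset.mem_union, Finset.mem_insert]
        tauto
      simp only [applyGhost]
      rw [hcells]

/-- Boundedness of reachable diagrams. -/
lemma kkd_bound (D0 : Diagram) (h0 : ∀ p ∈ D0.cells, 1 ≤ p.1)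
    (hg : D0.ghosts = ∅) {T : Diagram} (hT : T ∈ KKD D0) :
    T.ghosts ⊆ T.cells ∧
      T.cells ⊆ (Finset.Icc 1 (D0.cells.sup Prod.fst)) ×ˢ
        (D0.cells.image Prod.snd) := by
  simp only [KKD, Set.mem_setOf_eq] at hT
  induction hT with
  | refl =>
    constructor
    · simp [hg]
    · intro p hp
      simp only [Finset.mem_product, Finset.mem_Icc]
      exact ⟨⟨h0 p hp, Finset.le_sup hp⟩, Finset.mem_image_of_mem _ hp⟩
  | tail _ hstep ih =>
    obtain ⟨ihg, ihc⟩ := ih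
    obtain ⟨r, c, rhat, hmov, hcase⟩ := hstep
    obtain ⟨⟨hcell, _⟩, hng, h1, hlt, _, _⟩ := hmov
    have hbox := ihc hcell
    simp only [Finset.mem_product, Finset.mem_Icc] at hbox
    have hnewbox : ((rhat : ℕ), c) ∈
        (Finset.Icc 1 (D0.cells.sup Prod.fst)) ×ˢ (D0.cells.image Prod.snd) := by
      simp only [Finset.mem_product, Finset.mem_Icc]
      exact ⟨⟨h1, (le_of_lt hlt).trans hbox.1.2⟩, hbox.2⟩
    rcases hcase with rfl | rfl
    · constructor
      · intro g hgmem
        simp only [applyKohnert] at hgmem ⊢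
        have hgc := ihg hgmem
        have hne : g ≠ (r, c) := by rintro rfl; exact hng hgmem
        exact Finset.mem_insert_of_mem (Finset.mem_erase.mpr ⟨hne, hgc⟩)
      · intro p hp
        simp only [applyKohnert, Finset.mem_insert, Finset.mem_erase] at hp
        rcases hp with rfl | ⟨_, hp⟩
        · exact hnewbox
        · exact ihc hp
    · constructor
      · intro g hgmem
        simp only [applyGhost, Finset.mem_insert] at hgmem ⊢
        rcases hgmem with rfl | hgmem
        · exact Or.inr hcell
        · exact Or.inr (ihg hgmem)
      · intro p hp
        simp only [applyGhost, Finset.mem_insert] at hp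
        rcases hp with rfl | hp
        · exact hnewbox
        · exact ihc hp

/-- If D is a generalized skew diagram with dark(Key(D)) = dark(D)
and S = Key(D) \ D, then T ∪ S ∈ KKD(Key(D)) for all T ∈ KKD(D), whence
MaxG(D) ≤ MaxG(Key(D)). -/
theorem genSkew_union_mem_KKD_key (D : Finset (ℕ × ℕ)) (hD : IsGenSkew D)
    (hdark : dark (keyOf D) = dark D) :
    (∀ T ∈ KKD ⟨D, ∅⟩,
      (⟨T.cells ∪ (keyOf D \ D), T.ghosts⟩ : Diagram) ∈ KKD ⟨keyOf D, ∅⟩) ∧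
    MaxG ⟨D, ∅⟩ ≤ MaxG ⟨keyOf D, ∅⟩ := by
  have hsub : D ⊆ keyOf D := by
    intro p hp
    have : (p.1, p.2) ∈ keyOf D := mem_keyOf_iff.mpr ⟨p.2, by simpa using hp, (hD.1 p hp).2, le_rfl⟩
    simpa using this
  have key : ∀ T ∈ KKD ⟨D, ∅⟩, InvD D T ∧
      (⟨T.cells ∪ (keyOf D \ D), T.ghosts⟩ : Diagram) ∈ KKD ⟨keyOf D, ∅⟩ := by
    intro T hT
    simp only [KKD, Set.mem_setOf_eq] at hT
    induction hT with
    | refl =>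
      refine ⟨fun p hp => ⟨p.1, le_rfl, by simpa using hp⟩, ?_⟩
      have heq : (⟨D ∪ (keyOf D \ D), ∅⟩ : Diagram) = ⟨keyOf D, ∅⟩ := by
        simp [Finset.union_sdiff_of_subset hsub]
      show Relation.ReflTransGen KStep ⟨keyOf D, ∅⟩ _
      rw [show (⟨(⟨D, ∅⟩ : Diagram).cells ∪ (keyOf D \ D), (⟨D, (∅ : Finset (ℕ×ℕ))⟩ : Diagram).ghosts⟩ : Diagram)
          = ⟨keyOf D, ∅⟩ from heq]
    | tail _ hstep ih =>
      obtain ⟨ihInv, ihmem⟩ := ih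
      obtain ⟨hInv', hlift⟩ := step_lift hD ihInv hstep
      exact ⟨hInv', Relation.ReflTransGen.tail ihmem hlift⟩
  refine ⟨fun T hT => (key T hT).2, ?_⟩
  have h0row : ∀ p ∈ (⟨keyOf D, (∅ : Finset (ℕ×ℕ))⟩ : Diagram).cells, 1 ≤ p.1 := by
    intro p hp
    simp only at hp
    have : (p.1, p.2) ∈ keyOf D := by simpa using hp
    obtain ⟨c', hc', _, _⟩ := mem_keyOf_iff.mp this
    exact (hD.1 _ hc').1
  apply csSup_le_csSup
  · refine ⟨((Finset.Icc 1 ((keyOf D).sup Prod.fst)) ×ˢ ((keyOf D).image Prod.snd)).card, ?_⟩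
    rintro n ⟨T, hT, rfl⟩
    obtain ⟨hg, hc⟩ := kkd_bound ⟨keyOf D, ∅⟩ h0row rfl hT
    exact Finset.card_le_card (hg.trans hc)
  · exact ⟨0, ⟨⟨D, ∅⟩, Relation.ReflTransGen.refl, by simp⟩⟩
  · rintro n ⟨T, hT, rfl⟩
    exact ⟨⟨T.cells ∪ (keyOf D \ D), T.ghosts⟩, (key T hT).2, rfl⟩
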